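/- Fix a mesh size h > 0. If ρ, ν are mesh functions with ν, ρ·ν, D₀ν, and (Eν)·(D₊ρ) all in L²_h (products taken pointwise), then (ρ·ν, D₀ν)_{L²_h} = −(1/2)·(ν, (Eν)·(D₊ρ))_{L²_h}. -/

import Mathlib

noncomputable section

open Set Filter

/-- Forward discrete derivative `D₊u(n) = (u(n+1) - u(n))/h`. -/
def Dp (h : ℝ) (u : ℤ → ℝ) : ℤ → ℝ := fun n => (u (n + 1) - u n) / h

/-- Backward discrete derivative `D₋u(n) = (u(n) - u(n-1))/h`. -/
def Dm (h : ℝ) (u : ℤ → ℝ) : ℤ → ℝ := fun n => (u n - u (n - 1)) / h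

/-- Central discrete derivative `D₀u(n) = (u(n+1) - u(n-1))/(2h)`. -/
def D0 (h : ℝ) (u : ℤ → ℝ) : ℤ → ℝ := fun n => (u (n + 1) - u (n - 1)) / (2 * h)

/-- Shift operator `Eu(n) = u(n+1)`. -/
def Esh (u : ℤ → ℝ) : ℤ → ℝ := fun n => u (n + 1)

/-- Membership in `L²_h`: square-summability of the mesh function. -/
def MemL2 (u : ℤ → ℝ) : Prop := Summable fun n : ℤ => (u n) ^ 2

/-- The discrete inner product `(u,v)_{L²_h} = Σₙ u(n)·v(n)·h`. -/
def ip2 (h : ℝ) (u v : ℤ → ℝ) : ℝ := ∑' n : ℤ, u n * v n * h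

/-- The discrete `L²_h` norm. -/
def nrm (h : ℝ) (u : ℤ → ℝ) : ℝ := Real.sqrt (∑' n : ℤ, (u n) ^ 2 * h)

/-- The mesh weight `⟨x⟩ = √(x² + 1)` evaluated at the mesh point `x = n·h`. -/
def jp (h : ℝ) (n : ℤ) : ℝ := Real.sqrt (((n : ℝ) * h) ^ 2 + 1)

/-- Product of two square-summable mesh functions is summable. -/
lemma mul_summable_of_sq (a b : ℤ → ℝ) (ha : Summable fun n => a n ^ 2)
    (hb : Summable fun n => b n ^ 2) : Summable fun n => a n * b n := by
  apply Summable.of_abs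
  apply Summable.of_nonneg_of_le (fun n => abs_nonneg _) (fun n => ?_)
    ((ha.add hb).div_const 2)
  rw [abs_mul]
  nlinarith [sq_nonneg (|a n| - |b n|), sq_abs (a n), sq_abs (b n)]

/-- **Proposition 2.1 (3).**  If `ν, ρν, D₀ν, (Eν)(D₊ρ) ∈ L²_h`, then
`(ρν, D₀ν)_{L²_h} = -½ (ν, (Eν)(D₊ρ))_{L²_h}`. -/
theorem discrete_D0_inner_identity
    (h : ℝ) (hh : 0 < h) (ρ ν : ℤ → ℝ)
    (hν : MemL2 ν) (hρν : MemL2 (fun n => ρ n * ν n)) (hD0ν : MemL2 (D0 h ν))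
    (hEDp : MemL2 (fun n => Esh ν n * Dp h ρ n)) :
    ip2 h (fun n => ρ n * ν n) (D0 h ν)
      = -(1 / 2) * ip2 h ν (fun n => Esh ν n * Dp h ρ n) := by
  have hne : h ≠ 0 := hh.ne'
  -- shifted square-summability
  have hνp : Summable fun n : ℤ => ν (n + 1) ^ 2 := by
    have := (Equiv.addRight (1 : ℤ)).summable_iff.mpr hν
    simpa [Function.comp_def] using this
  have hνm : Summable fun n : ℤ => ν (n - 1) ^ 2 := by
    have := (Equiv.subRight (1 : ℤ)).summable_iff.mpr hν
    simpa [Function.comp_def] using this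
  -- the three basic cubic sums
  have hA : Summable fun n : ℤ => ρ n * ν n * ν (n + 1) :=
    mul_summable_of_sq _ _ hρν hνp
  have hC : Summable fun n : ℤ => ρ n * ν n * ν (n - 1) :=
    mul_summable_of_sq _ _ hρν hνm
  have hB : Summable fun n : ℤ => ρ (n + 1) * ν n * ν (n + 1) := by
    have := (Equiv.addRight (1 : ℤ)).summable_iff.mpr hC
    apply this.congr
    intro n
    simp [Function.comp]
    ring
  have hBC : (∑' n : ℤ, ρ (n + 1) * ν n * ν (n + 1))
      = ∑' n : ℤ, ρ n * ν n * ν (n - 1) := by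
    have := (Equiv.addRight (1 : ℤ)).tsum_eq (fun n : ℤ => ρ n * ν n * ν (n - 1))
    rw [← this]
    apply tsum_congr
    intro n
    simp [Equiv.addRight]
    ring
  -- rewrite LHS
  have hL : ip2 h (fun n => ρ n * ν n) (D0 h ν)
      = (1 / 2) * ((∑' n : ℤ, ρ n * ν n * ν (n + 1))
          - ∑' n : ℤ, ρ n * ν n * ν (n - 1)) := by
    unfold ip2
    rw [← Summable.tsum_sub hA hC, ← tsum_mul_left]
    apply tsum_congr
    intro n
    simp only [D0]
    field_simp
  -- rewrite RHS
  have hR : ip2 h ν (fun n => Esh ν n * Dp h ρ n)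
      = (∑' n : ℤ, ρ (n + 1) * ν n * ν (n + 1))
          - ∑' n : ℤ, ρ n * ν n * ν (n + 1) := by
    unfold ip2
    rw [← Summable.tsum_sub hB hA]
    apply tsum_congr
    intro n
    simp only [Esh, Dp]
    field_simp
  rw [hL, hR, hBC]
  ring
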